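/- arXiv:2406.13652 — 3 statements merged into one kernel-verified Lean document; each statement's English description precedes it below -/
import Mathlib

section
/- Let θ : ℝ → ℝ be continuous with θ(t) > 0, Θ(t) = ∫_0^t θ(s) ds, λ ≠ 0, τ ≠ 0, and σ(t)² = 2θ(t)λ². Define m(t) = μ(1 − e^{−Θ(t)}) + x₀e^{−Θ(t)}, v(t) = τ²λ²(1 − e^{−2Θ(t)}), and p(t, x) = (2π v(t))^{−1/2} exp(−(x − m(t))²/(2v(t))). Then for every t > 0 and every x ∈ ℝ, p satisfies the Fokker–Planck (Kolmogorov forward) equation ∂_t p(t,x) = −∂_x[θ(t)(μ − x)·p(t,x)] + (1/2)·τ²σ(t)²·∂_x² p(t,x). -/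
/-!
The marginal `p(t, ·)` is the Gaussian density with mean `m(t)` and variance `v(t)`, and these
solve the Ornstein–Uhlenbeck moment equations `m' = θ (μ - m)` and `v' = 2θ (τ²λ² - v)`. For any
Gaussian density whose moments solve these ODEs, the chain rule gives
`∂ₜ p = (-v'/(2v) + (x - m) m'/v + (x - m)² v'/(2v²)) p`, while `∂ₓ p = -(x - m)/v · p`
and `∂ₓ² p = ((x - m)²/v² - 1/v) p`; substituting the ODEs makes both sides of the
Fokker–Planck equation equal to `θ (1 - τ²λ²/v + (x - m)(μ - x)/v + τ²λ²(x - m)²/v²) p`.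
-/

open Real intervalIntegral

noncomputable def gaussianDensity (m v x : ℝ) : ℝ :=
  (2 * π * v) ^ (-(1:ℝ) / 2) * exp (-(x - m) ^ 2 / (2 * v))

section GaussianDensity

variable (m v : ℝ)

theorem hasDerivAt_gaussianDensity (x : ℝ) :
    HasDerivAt (gaussianDensity m v) (-(x - m) / v * gaussianDensity m v x) x := by
  have hexponent : HasDerivAt (fun y : ℝ => -(y - m) ^ 2 / (2 * v))
      (-(2 * (x - m) ^ 1 * 1) / (2 * v)) x :=
    ((((hasDerivAt_id x).sub_const m).pow 2).neg).div_const (2 * v)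
  refine (hexponent.exp.const_mul ((2 * π * v) ^ (-(1:ℝ) / 2))).congr_deriv ?_
  unfold gaussianDensity
  ring

theorem deriv_gaussianDensity :
    deriv (gaussianDensity m v) = fun x => -(x - m) / v * gaussianDensity m v x :=
  funext fun x => (hasDerivAt_gaussianDensity m v x).deriv

theorem deriv_deriv_gaussianDensity (x : ℝ) :
    deriv (deriv (gaussianDensity m v)) x =
      ((x - m) ^ 2 / v ^ 2 - 1 / v) * gaussianDensity m v x := by
  have hslope : HasDerivAt (fun y : ℝ => -(y - m) / v) (-1 / v) x := by
    simpa using ((hasDerivAt_id x).sub_const m).neg.div_const v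
  rw [deriv_gaussianDensity, (hslope.fun_mul (hasDerivAt_gaussianDensity m v x)).deriv]
  ring

end GaussianDensity

theorem HasDerivAt.gaussianDensity {m v : ℝ → ℝ} {m' v' t : ℝ} (x : ℝ)
    (hm : HasDerivAt m m' t) (hv : HasDerivAt v v' t) (hv0 : v t ≠ 0) :
    HasDerivAt (fun s => gaussianDensity (m s) (v s) x)
      ((-v' / (2 * v t) + (x - m t) * m' / v t + (x - m t) ^ 2 * v' / (2 * v t ^ 2)) *
        gaussianDensity (m t) (v t) x) t := by
  have h2πv : 2 * π * v t ≠ 0 := by positivity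
  have hnorm : HasDerivAt (fun s => (2 * π * v s) ^ (-(1:ℝ) / 2))
      (2 * π * v' * (-(1:ℝ) / 2) * (2 * π * v t) ^ (-(1:ℝ) / 2 - 1)) t :=
    (hv.const_mul (2 * π)).rpow_const (Or.inl h2πv)
  have hexponent : HasDerivAt (fun s => -(x - m s) ^ 2 / (2 * v s))
      ((-(2 * (x - m t) ^ 1 * (0 - m')) * (2 * v t) - -(x - m t) ^ 2 * (2 * v')) /
        (2 * v t) ^ 2) t :=
    (((hasDerivAt_const t x).sub hm).pow 2).neg.div (hv.const_mul 2) (by positivity)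
  refine (hnorm.fun_mul hexponent.exp).congr_deriv ?_
  unfold _root_.gaussianDensity
  rw [Real.rpow_sub_one h2πv]
  field_simp
  ring

/-- Fokker–Planck equation of the Ornstein–Uhlenbeck process `dX = θ (μ - X) dt + √(2θD) dW`
for a Gaussian density whose moments solve the OU moment equations. -/
theorem gaussianDensity_fokkerPlanck {m v : ℝ → ℝ} {θ μ D t : ℝ}
    (hm : HasDerivAt m (θ * (μ - m t)) t) (hv : HasDerivAt v (2 * θ * (D - v t)) t)
    (hv0 : v t ≠ 0) (x : ℝ) :
    deriv (fun s => gaussianDensity (m s) (v s) x) t =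
      -deriv (fun y => θ * (μ - y) * gaussianDensity (m t) (v t) y) x +
        θ * D * deriv (deriv (gaussianDensity (m t) (v t))) x := by
  have hdrift : HasDerivAt (fun y => θ * (μ - y)) (θ * (0 - 1)) x :=
    ((hasDerivAt_const x μ).sub (hasDerivAt_id x)).const_mul θ
  rw [(hm.gaussianDensity x hv hv0).deriv,
    (hdrift.fun_mul (hasDerivAt_gaussianDensity _ _ x)).deriv, deriv_deriv_gaussianDensity]
  field_simp
  ring

theorem hasDerivAt_ouMean {Θ : ℝ → ℝ} {θ t : ℝ} (μ x₀ : ℝ) (hΘ : HasDerivAt Θ θ t) :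
    HasDerivAt (fun s => μ * (1 - exp (-Θ s)) + x₀ * exp (-Θ s))
      (θ * (μ - (μ * (1 - exp (-Θ t)) + x₀ * exp (-Θ t)))) t := by
  refine ((((hasDerivAt_const t 1).sub hΘ.fun_neg.exp).const_mul μ).add
    (hΘ.fun_neg.exp.const_mul x₀)).congr_deriv ?_
  ring

theorem hasDerivAt_ouVariance {Θ : ℝ → ℝ} {θ t : ℝ} (D : ℝ) (hΘ : HasDerivAt Θ θ t) :
    HasDerivAt (fun s => D * (1 - exp (-(2 * Θ s))))
      (2 * θ * (D - D * (1 - exp (-(2 * Θ t))))) t := by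
  refine (((hasDerivAt_const t 1).sub (hΘ.const_mul 2).fun_neg.exp).const_mul D).congr_deriv ?_
  ring

/-- The D³GM forward marginal satisfies the Fokker–Planck (Kolmogorov forward)
equation: with `Θ(t) = ∫_0^t θ`, mean `m(t) = μ(1 − e^{−Θ(t)}) + x₀ e^{−Θ(t)}`,
variance `v(t) = τ²λ²(1 − e^{−2Θ(t)})` (under the measure-preserving constraint
`σ(t)² = 2θ(t)λ²`), the Gaussian density
`p(t,x) = (2π v(t))^{−1/2} exp(−(x − m(t))²/(2 v(t)))` satisfies
`∂_t p = −∂_x[θ(t)(μ − x) p] + (1/2) τ² σ(t)² ∂_x² p` for all `t > 0`, `x`. -/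
theorem d3gm_fokker_planck (θ σ : ℝ → ℝ) (hθc : Continuous θ)
    (hθ : ∀ t, 0 < θ t) (lam τ μ x₀ : ℝ) (hlam : lam ≠ 0) (hτ : τ ≠ 0)
    (hσ : ∀ t, (σ t) ^ 2 = 2 * θ t * lam ^ 2)
    (Θ m v : ℝ → ℝ) (p : ℝ → ℝ → ℝ)
    (hΘ : ∀ t, Θ t = ∫ s in (0:ℝ)..t, θ s)
    (hm : ∀ t, m t = μ * (1 - Real.exp (-Θ t)) + x₀ * Real.exp (-Θ t))
    (hv : ∀ t, v t = τ ^ 2 * lam ^ 2 * (1 - Real.exp (-(2 * Θ t))))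
    (hp : ∀ t x, p t x = (2 * Real.pi * v t) ^ (-(1:ℝ)/2) *
      Real.exp (-(x - m t) ^ 2 / (2 * v t))) :
    ∀ t : ℝ, 0 < t → ∀ x : ℝ,
      deriv (fun t' => p t' x) t =
        -(deriv (fun x' => θ t * (μ - x') * p t x') x) +
          (1 / 2) * τ ^ 2 * (σ t) ^ 2 *
            deriv (fun x' => deriv (fun y => p t y) x') x := by
  intro t ht x
  obtain rfl : p = fun t x => gaussianDensity (m t) (v t) x := funext₂ hp
  obtain rfl : m = _ := funext hm
  obtain rfl : v = _ := funext hv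
  have hΘ' : HasDerivAt Θ (θ t) t := by
    rw [funext hΘ]
    exact (hθc.integral_hasStrictDerivAt 0 t).hasDerivAt
  have hΘpos : 0 < Θ t := by
    rw [hΘ]
    exact intervalIntegral_pos_of_pos (hθc.intervalIntegrable 0 t) hθ ht
  have hv0 : τ ^ 2 * lam ^ 2 * (1 - exp (-(2 * Θ t))) ≠ 0 := by
    have : exp (-(2 * Θ t)) < 1 := exp_lt_one_iff.mpr (by linarith)
    have : 0 < 1 - exp (-(2 * Θ t)) := by linarith
    positivity
  have hdiffusion : 1 / 2 * τ ^ 2 * σ t ^ 2 = θ t * (τ ^ 2 * lam ^ 2) := by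
    rw [hσ]
    ring
  rw [hdiffusion]
  exact gaussianDensity_fokkerPlanck (hasDerivAt_ouMean μ x₀ hΘ')
    (hasDerivAt_ouVariance _ hΘ') hv0 x
end

section
/- Let d ≥ 1 and let ε = (ε₁, …, ε_d) be distributed according to the d-fold product of the standard real Gaussian measure N(0,1). Then for every t ≥ 0, P(∑_{i=1}^d ε_i² ≥ d + 2√(d·t) + 2t) ≤ exp(−t). Equivalently, for every δ ∈ (0,1), with probability at least 1 − δ one has ∑_{i=1}^d ε_i² < d + 2√(d·log(1/δ)) + 2·log(1/δ). -/
open Real MeasureTheory ProbabilityTheory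
open scoped ENNReal NNReal

/-!
Chernoff bound: for `0 ≤ λ < 1/2` the moment generating function of `∑ εᵢ²` is
`(1 - 2λ)^(-d/2)`, so `P(∑ εᵢ² ≥ a) ≤ e^{-λa} (1 - 2λ)^(-d/2)`. Writing `t = d s²`, the
threshold is `a = d (1 + 2s + 2s²)`, and the choice `λ = s / (1 + 2s)` together with
`log (1 + 2s) ≤ 2s (1 + s) / (1 + 2s)` makes the exponent at most `-t`.
-/

theorem integral_exp_mul_sq_gaussianReal {v : ℝ≥0} {l : ℝ} (hl : l * v < 1 / 2) :
    ∫ x, exp (l * x ^ 2) ∂gaussianReal 0 v = (√(1 - 2 * l * v))⁻¹ := by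
  rcases eq_or_ne v 0 with rfl | hv
  · simp [gaussianReal_zero_var]
  have hv_pos : (0 : ℝ) < v := by positivity
  have hb : 0 < 1 / (2 * v) - l := by
    rw [sub_pos, lt_div_iff₀ (by positivity)]; linarith
  have hdensity : ∀ x : ℝ, gaussianPDFReal 0 v x • exp (l * x ^ 2)
      = (√(2 * π * v))⁻¹ * exp (-(1 / (2 * v) - l) * x ^ 2) := by
    intro x
    rw [gaussianPDFReal, smul_eq_mul, mul_assoc, ← exp_add]
    congr 2
    field_simp
    ring
  simp_rw [integral_gaussianReal_eq_integral_smul hv, hdensity]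
  rw [integral_const_mul, integral_gaussian, ← sqrt_inv, ← sqrt_mul (by positivity), ← sqrt_inv]
  congr 1
  field_simp

theorem integrable_exp_mul_sq_gaussianReal {v : ℝ≥0} {l : ℝ} (hl : l * v < 1 / 2) :
    Integrable (fun x ↦ exp (l * x ^ 2)) (gaussianReal 0 v) :=
  .of_integral_ne_zero <| by
    rw [integral_exp_mul_sq_gaussianReal hl]
    exact (inv_pos.2 (sqrt_pos.2 (by linarith))).ne'

section Pi

variable {ι : Type*} [Fintype ι]

theorem integral_exp_mul_sum_sq_pi_gaussianReal {v : ℝ≥0} {l : ℝ} (hl : l * v < 1 / 2) :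
    ∫ ε, exp (l * ∑ i, ε i ^ 2) ∂Measure.pi (fun _ : ι ↦ gaussianReal 0 v)
      = (√(1 - 2 * l * v))⁻¹ ^ Fintype.card ι := by
  simp_rw [Finset.mul_sum, exp_sum]
  rw [integral_fintype_prod_eq_pow (fun x ↦ exp (l * x ^ 2)), integral_exp_mul_sq_gaussianReal hl]

theorem integrable_exp_mul_sum_sq_pi_gaussianReal {v : ℝ≥0} {l : ℝ} (hl : l * v < 1 / 2) :
    Integrable (fun ε : ι → ℝ ↦ exp (l * ∑ i, ε i ^ 2))
      (Measure.pi (fun _ : ι ↦ gaussianReal 0 v)) :=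
  .of_integral_ne_zero <| by
    rw [integral_exp_mul_sum_sq_pi_gaussianReal hl]
    exact pow_ne_zero _ (inv_pos.2 (sqrt_pos.2 (by linarith))).ne'

theorem sqrt_one_add_two_mul_le_exp {s : ℝ} (hs : 0 ≤ s) :
    √(1 + 2 * s) ≤ exp (s * (1 + s) / (1 + 2 * s)) := by
  set w := s * (1 + s) / (1 + 2 * s)
  have hw : 0 ≤ w := by positivity
  have hs_le : s ≤ w + w ^ 2 := by
    have : w + w ^ 2 - s = s ^ 4 / (1 + 2 * s) ^ 2 := by
      simp only [w]; field_simp; ring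
    linarith [show 0 ≤ s ^ 4 / (1 + 2 * s) ^ 2 by positivity]
  calc √(1 + 2 * s) ≤ √(exp w ^ 2) := by
        gcongr
        rw [← exp_nat_mul]
        push_cast
        nlinarith [quadratic_le_exp_of_nonneg (by positivity : 0 ≤ 2 * w)]
    _ = exp w := sqrt_sq (exp_nonneg w)

theorem measureReal_sum_sq_ge_le_exp {s : ℝ} (hs : 0 ≤ s) :
    (Measure.pi (fun _ : ι ↦ gaussianReal 0 1)).real
        {ε | Fintype.card ι * (1 + 2 * s + 2 * s ^ 2) ≤ ∑ i, ε i ^ 2}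
      ≤ exp (-(Fintype.card ι * s ^ 2)) := by
  set n := Fintype.card ι
  set a := (n : ℝ) * (1 + 2 * s + 2 * s ^ 2)
  set l := s / (1 + 2 * s)
  have hl_nonneg : 0 ≤ l := by positivity
  have hl : l * ((1 : ℝ≥0) : ℝ) < 1 / 2 := by
    rw [NNReal.coe_one, mul_one, div_lt_iff₀ (by positivity)]; linarith
  have hmgf : √(1 - 2 * l * ((1 : ℝ≥0) : ℝ)) = (√(1 + 2 * s))⁻¹ := by
    rw [← sqrt_inv, NNReal.coe_one, mul_one]; congr 1; simp only [l]; field_simp; ring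
  calc _ ≤ exp (-l * a) * mgf (fun ε : ι → ℝ ↦ ∑ i, ε i ^ 2)
        (Measure.pi (fun _ : ι ↦ gaussianReal 0 1)) l :=
        measure_ge_le_exp_mul_mgf a hl_nonneg (integrable_exp_mul_sum_sq_pi_gaussianReal hl)
    _ = exp (-l * a) * √(1 + 2 * s) ^ n := by
        rw [mgf, integral_exp_mul_sum_sq_pi_gaussianReal hl, hmgf, inv_inv]
    _ ≤ exp (-l * a) * exp (s * (1 + s) / (1 + 2 * s)) ^ n := by
        gcongr; exact sqrt_one_add_two_mul_le_exp hs
    _ = exp (-(n * s ^ 2)) := by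
        rw [← exp_nat_mul, ← exp_add]; congr 1; simp only [a, l]; field_simp; ring

theorem measure_sum_sq_ge_le_exp [Nonempty ι] {t : ℝ} (ht : 0 ≤ t) :
    Measure.pi (fun _ : ι ↦ gaussianReal 0 1)
        {ε | Fintype.card ι + 2 * √(Fintype.card ι * t) + 2 * t ≤ ∑ i, ε i ^ 2}
      ≤ ENNReal.ofReal (exp (-t)) := by
  set n := Fintype.card ι
  have hn : (0 : ℝ) < n := by exact_mod_cast Fintype.card_pos
  set s := √(t / n)
  have hts : n * s ^ 2 = t := by
    rw [sq_sqrt (by positivity)]; field_simp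
  have hsqrt : √(n * t) = n * s := by
    rw [← hts, ← mul_assoc, ← sq, ← mul_pow, sqrt_sq (by positivity)]
  have hthreshold : (n : ℝ) + 2 * √(n * t) + 2 * t = n * (1 + 2 * s + 2 * s ^ 2) := by
    rw [hsqrt, ← hts]; ring
  rw [hthreshold, ← hts, ← ofReal_measureReal]
  exact ENNReal.ofReal_le_ofReal (measureReal_sum_sq_ge_le_exp (sqrt_nonneg _))

end Pi

theorem ofReal_one_sub_le_measure_lt {Ω : Type*} [MeasurableSpace Ω] {μ : Measure Ω}
    [IsProbabilityMeasure μ] {X : Ω → ℝ} (hX : Measurable X) {a δ : ℝ} (hδ : 0 ≤ δ)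
    (h : μ {ω | a ≤ X ω} ≤ ENNReal.ofReal δ) :
    ENNReal.ofReal (1 - δ) ≤ μ {ω | X ω < a} := by
  have hcompl : {ω | X ω < a} = {ω | a ≤ X ω}ᶜ := by ext; simp
  rw [hcompl, prob_compl_eq_one_sub (measurableSet_le measurable_const hX),
    ENNReal.ofReal_sub _ hδ, ENNReal.ofReal_one]
  exact tsub_le_tsub_left h 1

/-- Laurent–Massart one-sided χ² tail bound: if `ε = (ε₁, …, ε_d)` is a vector
of i.i.d. standard Gaussians (`d ≥ 1`), then for every `t ≥ 0`,
`P(∑ εᵢ² ≥ d + 2√(dt) + 2t) ≤ e^{−t}`; equivalently, for every `δ ∈ (0,1)`,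
with probability at least `1 − δ`,
`∑ εᵢ² < d + 2√(d log(1/δ)) + 2 log(1/δ)`. -/
theorem chi_square_tail_bound (d : ℕ) (hd : 1 ≤ d) :
    (∀ t : ℝ, 0 ≤ t →
      (Measure.pi (fun _ : Fin d => gaussianReal 0 1))
          {ε | (d : ℝ) + 2 * Real.sqrt ((d : ℝ) * t) + 2 * t ≤
            ∑ i, (ε i) ^ 2} ≤ ENNReal.ofReal (Real.exp (-t))) ∧
    (∀ δ : ℝ, 0 < δ → δ < 1 →
      ENNReal.ofReal (1 - δ) ≤
        (Measure.pi (fun _ : Fin d => gaussianReal 0 1))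
          {ε | ∑ i, (ε i) ^ 2 <
            (d : ℝ) + 2 * Real.sqrt ((d : ℝ) * Real.log (1 / δ)) +
              2 * Real.log (1 / δ)}) := by
  have : Nonempty (Fin d) := ⟨⟨0, hd⟩⟩
  have tail : ∀ t : ℝ, 0 ≤ t →
      (Measure.pi (fun _ : Fin d => gaussianReal 0 1))
          {ε | (d : ℝ) + 2 * √(d * t) + 2 * t ≤ ∑ i, ε i ^ 2} ≤ ENNReal.ofReal (exp (-t)) :=
    fun t ht ↦ by simpa using measure_sum_sq_ge_le_exp (ι := Fin d) ht
  refine ⟨tail, fun δ hδ_pos hδ_lt_one ↦ ?_⟩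
  have hlog : 0 ≤ log (1 / δ) := log_nonneg (one_le_one_div hδ_pos hδ_lt_one.le)
  have hexp : exp (-log (1 / δ)) = δ := by rw [exp_neg, exp_log (by positivity), one_div, inv_inv]
  refine ofReal_one_sub_le_measure_lt (by fun_prop) hδ_pos.le ?_
  simpa only [hexp] using tail _ hlog
end

section
/- Fix x₀ ≠ μ, λ ≠ 0, Θ(T) > 0, and set c = 1 − e^{−2Θ(T)} ∈ (0,1). For τ > 0, let P_τ = N(μ(1 − e^{−Θ(T)}) + x₀e^{−Θ(T)}, τ²λ²c) (the law of the D³GM forward state x_T) and Q_τ = N(μ, τ²λ²) (the target stationary law x_∞). Then the Kullback–Leibler divergence satisfies KL(P_τ ‖ Q_τ) = −(1/2)·log c − (1/2)·e^{−2Θ(T)} + (x₀ − μ)²·e^{−2Θ(T)}/(2τ²λ²), and τ ↦ KL(P_τ ‖ Q_τ) is strictly decreasing on (0, ∞). Hence increasing the stiffness τ > 1 brings the distribution of x_T strictly closer (in KL) to the distribution of x_∞. -/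
/-!
The log-likelihood ratio of two Gaussian densities is a quadratic polynomial in `x`, so its
expectation under the first Gaussian only involves the first two moments, which gives the
closed form `KL(N(m₁, v₁) ‖ N(m₂, v₂)) = log (v₂ / v₁) / 2 + (v₁ + (m₁ - m₂)²) / (2 v₂) - 1 / 2`.
For `P_τ` and `Q_τ` the variance ratio is `c` whatever `τ` is, so `τ` only enters through the
mean-mismatch term `(x₀ - μ)² e^{-2Θ(T)} / (2τ²λ²)`, which is strictly decreasing as soon as
`x₀ ≠ μ`.
-/

open Real MeasureTheory ProbabilityTheory
open scoped NNReal

lemma integrable_sq_sub_gaussianReal (m a : ℝ) (v : ℝ≥0) :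
    Integrable (fun x ↦ (x - a) ^ 2) (gaussianReal m v) :=
  ((memLp_id_gaussianReal 2).sub (memLp_const a)).integrable_sq

lemma integral_sq_sub_gaussianReal (m a : ℝ) (v : ℝ≥0) :
    ∫ x, (x - a) ^ 2 ∂gaussianReal m v = v + (m - a) ^ 2 := by
  have hX : MemLp (fun x ↦ x - a) 2 (gaussianReal m v) :=
    (memLp_id_gaussianReal 2).sub (memLp_const a)
  have hvar : Var[fun x ↦ x - a; gaussianReal m v] = v := by
    rw [variance_sub_const (X := fun x ↦ x) aestronglyMeasurable_id,
      variance_fun_id_gaussianReal]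
  have hmean : ∫ x, (x - a) ∂gaussianReal m v = m - a := by
    rw [integral_sub (f := fun x ↦ x) ((memLp_id_gaussianReal 1).integrable le_rfl)
      (integrable_const a), integral_id_gaussianReal, integral_const, probReal_univ, one_smul]
  rw [variance_eq_sub hX, hmean] at hvar
  simp only [Pi.pow_apply] at hvar
  linarith

lemma log_gaussianPDFReal_div {m₁ m₂ : ℝ} {v₁ v₂ : ℝ≥0} (hv₁ : v₁ ≠ 0) (hv₂ : v₂ ≠ 0) (x : ℝ) :
    log (gaussianPDFReal m₁ v₁ x / gaussianPDFReal m₂ v₂ x) =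
      log (v₂ / v₁) / 2 - (x - m₁) ^ 2 / (2 * v₁) + (x - m₂) ^ 2 / (2 * v₂) := by
  have h₁ : (0 : ℝ) < v₁ := by positivity
  have h₂ : (0 : ℝ) < v₂ := by positivity
  rw [log_div (gaussianPDFReal_pos _ _ _ hv₁).ne' (gaussianPDFReal_pos _ _ _ hv₂).ne',
    gaussianPDFReal, gaussianPDFReal, log_mul (by positivity) (exp_ne_zero _),
    log_mul (by positivity) (exp_ne_zero _), log_inv, log_inv, log_exp, log_exp,
    log_sqrt (by positivity), log_sqrt (by positivity), log_div h₂.ne' h₁.ne',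
    log_mul (by positivity) h₁.ne', log_mul (by positivity) h₂.ne']
  ring

lemma integral_log_gaussianPDFReal_div {m₁ m₂ : ℝ} {v₁ v₂ : ℝ≥0} (hv₁ : v₁ ≠ 0)
    (hv₂ : v₂ ≠ 0) :
    ∫ x, log (gaussianPDFReal m₁ v₁ x / gaussianPDFReal m₂ v₂ x) ∂gaussianReal m₁ v₁ =
      log (v₂ / v₁) / 2 + (v₁ + (m₁ - m₂) ^ 2) / (2 * v₂) - 1 / 2 := by
  have hq₁ := (integrable_sq_sub_gaussianReal m₁ m₁ v₁).div_const (2 * (v₁ : ℝ))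
  have hq₂ := (integrable_sq_sub_gaussianReal m₁ m₂ v₁).div_const (2 * (v₂ : ℝ))
  simp_rw [log_gaussianPDFReal_div hv₁ hv₂]
  rw [integral_add ?_ hq₂, integral_sub (integrable_const _) hq₁, integral_const, integral_div,
    integral_div, integral_sq_sub_gaussianReal, integral_sq_sub_gaussianReal, probReal_univ,
    one_smul, sub_self]
  · field_simp
    ring
  · exact (integrable_const _).sub hq₁

/-- KL divergence between the finite-time D³GM forward state and the
stationary law: with `c = 1 − e^{−2Θ(T)} ∈ (0,1)`,
`P_τ = N(μ(1 − e^{−Θ(T)}) + x₀ e^{−Θ(T)}, τ²λ²c)` and `Q_τ = N(μ, τ²λ²)`,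
the divergence `K(τ) = KL(P_τ ‖ Q_τ)` equals
`−(1/2) log c − (1/2) e^{−2Θ(T)} + (x₀ − μ)² e^{−2Θ(T)} / (2τ²λ²)` and is
strictly decreasing in `τ` on `(0, ∞)`; hence increasing the stiffness `τ`
brings `x_T` strictly closer in KL to `x_∞`. -/
theorem d3gm_kl_stiffness (x₀ μ lam ΘT : ℝ) (hx : x₀ ≠ μ) (hlam : lam ≠ 0)
    (hΘ : 0 < ΘT)
    (c : ℝ) (hc : c = 1 - Real.exp (-(2 * ΘT)))
    (K : ℝ → ℝ)
    (hK : ∀ τ : ℝ, 0 < τ → K τ =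
      ∫ x, Real.log
        (gaussianPDFReal (μ * (1 - Real.exp (-ΘT)) + x₀ * Real.exp (-ΘT))
            (Real.toNNReal (τ ^ 2 * lam ^ 2 * c)) x /
          gaussianPDFReal μ (Real.toNNReal (τ ^ 2 * lam ^ 2)) x)
        ∂(gaussianReal (μ * (1 - Real.exp (-ΘT)) + x₀ * Real.exp (-ΘT))
            (Real.toNNReal (τ ^ 2 * lam ^ 2 * c)))) :
    (∀ τ : ℝ, 0 < τ → K τ =
      -(1 / 2) * Real.log c - (1 / 2) * Real.exp (-(2 * ΘT)) +
        (x₀ - μ) ^ 2 * Real.exp (-(2 * ΘT)) / (2 * τ ^ 2 * lam ^ 2)) ∧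
    StrictAntiOn K (Set.Ioi 0) := by
  have hc₀ : 0 < c := by rw [hc, sub_pos, exp_lt_one_iff]; linarith
  have hformula : ∀ τ : ℝ, 0 < τ → K τ =
      -(1 / 2) * Real.log c - (1 / 2) * Real.exp (-(2 * ΘT)) +
        (x₀ - μ) ^ 2 * Real.exp (-(2 * ΘT)) / (2 * τ ^ 2 * lam ^ 2) := by
    intro τ hτ
    have hs : 0 < τ ^ 2 * lam ^ 2 := by positivity
    have hsc : 0 < τ ^ 2 * lam ^ 2 * c := by positivity
    have hmean : μ * (1 - rexp (-ΘT)) + x₀ * rexp (-ΘT) - μ = (x₀ - μ) * rexp (-ΘT) := by ring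
    rw [hK τ hτ, integral_log_gaussianPDFReal_div (toNNReal_pos.mpr hsc).ne'
      (toNNReal_pos.mpr hs).ne', coe_toNNReal _ hs.le, coe_toNNReal _ hsc.le, hmean, mul_pow,
      ← exp_nat_mul, div_mul_cancel_left₀ hs.ne', log_inv, hc]
    push_cast
    field_simp
    ring
  refine ⟨hformula, StrictAntiOn.congr ?_ fun τ hτ ↦ (hformula τ hτ).symm⟩
  intro a (ha : 0 < a) b (hb : 0 < b) hab
  have hmismatch : 0 < (x₀ - μ) ^ 2 * rexp (-(2 * ΘT)) := by
    have := sub_ne_zero.mpr hx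
    positivity
  dsimp only
  gcongr
end
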